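/- Let ω be a primitive m-th root of unity and let L and L' be m×m matrices (indices in ℤ/m) with L_{ii} = ω^i p, L'_{ii} = ω^i k, and off-diagonal entries satisfying L'_{ij} = −ω^i L_{m−i, m−j} for i ≠ j (indices mod m). Then with C = Σ_{i∈ℤ/m} E_{i,−i} and D = diag(1, ω, …, ω^{m−1}) one has L' − p·Id = −D · C (L − k·Id) C^{-1}, and consequently det(L' − p·Id) = − det(L − k·Id). -/
import Mathlib

lemma sumZMod2 : (∑ i : ZMod 2, i.val) = 1 := by decide
lemma sumZMod3 : (∑ i : ZMod 3, i.val) = 3 := by decide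
lemma sumZMod4 : (∑ i : ZMod 4, i.val) = 6 := by decide
lemma sumZMod6 : (∑ i : ZMod 6, i.val) = 15 := by decide

/-- The duality identity for the Lax matrix: with `C = Σ_i E_{i,-i}` and
`D = diag(1, ω, …, ω^{m-1})` one has
`L' - p·Id = -D·C·(L - k·Id)·C⁻¹`, hence `det(L' - p·Id) = -det(L - k·Id)`. -/
theorem stmt6 (m : ℕ) [NeZero m] (hm : m ∈ ({2, 3, 4, 6} : Set ℕ)) (ω p k : ℂ)
    (hω : IsPrimitiveRoot ω m)
    (L L' : Matrix (ZMod m) (ZMod m) ℂ)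
    (hL : ∀ i : ZMod m, L i i = ω ^ i.val * p)
    (hL' : ∀ i : ZMod m, L' i i = ω ^ i.val * k)
    (hoff : ∀ i j : ZMod m, i ≠ j → L' i j = -ω ^ i.val * L (-i) (-j))
    (C : Matrix (ZMod m) (ZMod m) ℂ)
    (hC : ∀ i j : ZMod m, C i j = if j = -i then 1 else 0)
    (D : Matrix (ZMod m) (ZMod m) ℂ)
    (hD : D = Matrix.diagonal (fun i : ZMod m => ω ^ i.val)) :
    L' - p • (1 : Matrix (ZMod m) (ZMod m) ℂ)
        = -(D * (C * (L - k • (1 : Matrix (ZMod m) (ZMod m) ℂ)) * C⁻¹)) ∧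
      (L' - p • (1 : Matrix (ZMod m) (ZMod m) ℂ)).det
        = -((L - k • (1 : Matrix (ZMod m) (ZMod m) ℂ)).det) := by
  set M : Matrix (ZMod m) (ZMod m) ℂ := L - k • (1 : Matrix (ZMod m) (ZMod m) ℂ) with hM
  -- C * C = 1
  have hCC : C * C = 1 := by
    ext i j
    rw [Matrix.mul_apply, Finset.sum_eq_single (-i) (fun x _ hx => by simp [hC, hx])
      (by simp)]
    simp [hC, Matrix.one_apply, eq_comm]
  have hCinv : C⁻¹ = C := Matrix.inv_eq_right_inv hCC
  -- left and right multiplication by C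
  have hmulC : ∀ (X : Matrix (ZMod m) (ZMod m) ℂ) (i j : ZMod m),
      (C * X * C) i j = X (-i) (-j) := by
    intro X i j
    have h1 : ∀ l : ZMod m, (j = -l) = (l = -j) := fun l =>
      propext ⟨fun h => by subst h; simp, fun h => by subst h; simp⟩
    simp [Matrix.mul_apply, hC, Finset.mul_sum, h1, Finset.sum_ite_eq']
  -- ω^i.val * ω^(-i).val = 1
  have hinv : ∀ i : ZMod m, ω ^ i.val * ω ^ (-i : ZMod m).val = 1 := by
    intro i
    by_cases hi : i = 0
    · simp [hi]
    · rw [← pow_add]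
      have h1 : i.val + (-i : ZMod m).val = m := by
        rw [ZMod.neg_val, if_neg hi]
        have := ZMod.val_lt i
        have h2 : i.val ≠ 0 := by
          simpa [ZMod.val_eq_zero] using hi
        omega
      rw [h1, hω.pow_eq_one]
  -- the matrix identity
  have hmain : L' - p • (1 : Matrix (ZMod m) (ZMod m) ℂ)
      = -(D * (C * M * C⁻¹)) := by
    rw [hCinv]
    ext i j
    have hrhs : (-(D * (C * M * C))) i j = -(ω ^ i.val * M (-i) (-j)) := by
      simp only [Matrix.neg_apply, hD, Matrix.diagonal_mul, hmulC]
    rw [Matrix.sub_apply, hrhs, hM]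
    by_cases hij : i = j
    · subst hij
      simp only [Matrix.sub_apply, Matrix.smul_apply, Matrix.one_apply_eq, smul_eq_mul,
        mul_one, hL, hL']
      linear_combination p * hinv i
    · have hnij : (-i : ZMod m) ≠ -j := fun h => hij (neg_injective h)
      simp only [Matrix.sub_apply, Matrix.smul_apply, Matrix.one_apply_ne hij,
        Matrix.one_apply_ne hnij, smul_eq_mul, mul_zero, sub_zero]
      rw [hoff i j hij]
      ring
  refine ⟨hmain, ?_⟩
  -- determinant part
  have hcard : Fintype.card (ZMod m) = m := ZMod.card m
  have hccdet : C.det * C.det = 1 := by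
    have := congrArg Matrix.det hCC
    rwa [Matrix.det_mul, Matrix.det_one] at this
  have hDdet : D.det = ω ^ (∑ i : ZMod m, i.val) := by
    rw [hD, Matrix.det_diagonal, Finset.prod_pow_eq_pow_sum]
  -- (-1)^m * D.det = -1
  have hdd : (-1 : ℂ) ^ m * D.det = -1 := by
    rw [hDdet]
    have h2 : m % 2 = 0 → ω ^ (m / 2) = -1 := by
      intro hpar
      have hprim : IsPrimitiveRoot (ω ^ (m / 2)) 2 :=
        hω.pow (Nat.pos_of_ne_zero (NeZero.ne m)) (by omega : m = (m/2) * 2)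
      exact hprim.eq_neg_one_of_two_right
    rcases hm with h | h | h | h
    · subst h
      have hh := h2 (by norm_num)
      norm_num at hh
      rw [sumZMod2, pow_one, hh]
      norm_num
    · subst h
      rw [sumZMod3, hω.pow_eq_one]
      norm_num
    · subst h
      have h1 := hω.pow_eq_one
      have hh := h2 (by norm_num)
      norm_num at hh
      rw [sumZMod4, show ω ^ 6 = ω ^ 4 * ω ^ 2 by ring, h1, hh]
      norm_num
    · subst h
      have h1 := hω.pow_eq_one
      have hh := h2 (by norm_num)
      norm_num at hh
      rw [sumZMod6, show ω ^ 15 = (ω ^ 6) ^ 2 * ω ^ 3 by ring, h1, hh]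
      norm_num
  rw [hmain, hCinv, Matrix.det_neg, hcard, Matrix.det_mul, Matrix.det_mul, Matrix.det_mul]
  linear_combination (C.det * C.det * M.det) * hdd - M.det * hccdet
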